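/- Let 𝒯 be a tree of dyadic cubes in ℝⁿ, let μ be a Radon measure on ℝⁿ, let V be an m-dimensional linear subspace of ℝⁿ, let α ∈ (0,∞), and let X = X(V,α). If μ(R) = 0 for every Q ∈ 𝒯 and every R ∈ 𝒯 ∩ Δ*_{Q,X}, then there exists a Lipschitz function f : V → V⊥ with Lipschitz constant at most α such that μ(Leaves(𝒯) \ Graph(f)) = 0. -/

import Mathlib

open MeasureTheory Metric Set
open scoped ENNReal NNReal

noncomputable section

abbrev E (n : ℕ) := EuclideanSpace ℝ (Fin n)

/-- The bad cone `X(V,α) = {x : dist(x,V) > α · dist(x,V^⊥)}`. -/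
def badCone {n : ℕ} (V : Submodule ℝ (E n)) (α : ℝ) : Set (E n) :=
  {x | α * Metric.infDist x (Vᗮ : Set (E n)) < Metric.infDist x (V : Set (E n))}

/-- The translated bad cone `X_x = x + X(V,α)`. -/
def badConeAt {n : ℕ} (V : Submodule ℝ (E n)) (α : ℝ) (x : E n) : Set (E n) :=
  {y | y - x ∈ badCone V α}

/-- `f` has Lipschitz constant at most `α`. -/
def LipBound {n : ℕ} (V : Submodule ℝ (E n)) (α : ℝ) (f : V → Vᗮ) : Prop :=
  ∀ v w : V, dist (f v) (f w) ≤ α * dist v w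

/-- The graph of `f : V → V^⊥`, as a subset of `ℝⁿ`. -/
def graphOf {n : ℕ} (V : Submodule ℝ (E n)) (f : V → Vᗮ) : Set (E n) :=
  {x | ∃ v : V, x = (v : E n) + (f v : E n)}

/-- A half-open dyadic cube, described by generation `k` and corner coordinates `j`. -/
structure DyadicCube (n : ℕ) where
  k : ℤ
  j : Fin n → ℤ

namespace DyadicCube

/-- Side length `2^{-k}`. -/
def side {n : ℕ} (Q : DyadicCube n) : ℝ := 2 ^ (-Q.k)

/-- The cube as a subset of `ℝⁿ`. -/
def toSet {n : ℕ} (Q : DyadicCube n) : Set (E n) :=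
  {x | ∀ i, (Q.j i : ℝ) * Q.side ≤ x i ∧ x i < ((Q.j i : ℝ) + 1) * Q.side}

/-- The geometric center of the cube. -/
def center {n : ℕ} (Q : DyadicCube n) : E n :=
  (EuclideanSpace.equiv (Fin n) ℝ).symm fun i => ((Q.j i : ℝ) + 1 / 2) * Q.side

/-- The diameter `√n · side Q`. -/
def diam {n : ℕ} (Q : DyadicCube n) : ℝ := Real.sqrt n * Q.side

end DyadicCube

/-- The radius `r_{Q,X} = 81 √n max(α,1/α) side Q`. -/
def coneRadius {n : ℕ} (α : ℝ) (Q : DyadicCube n) : ℝ :=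
  81 * Real.sqrt n * max α α⁻¹ * Q.side

/-- The conical annulus `A_{Q,X} = X_Q ∩ B̄(x_Q,r_{Q,X}) \ U(x_Q,r_{Q,X}/3)`. -/
def conAnnulus {n : ℕ} (V : Submodule ℝ (E n)) (α : ℝ) (Q : DyadicCube n) : Set (E n) :=
  ((⋃ x ∈ Q.toSet, badConeAt V α x) ∩ closedBall Q.center (coneRadius α Q)) \
    ball Q.center (coneRadius α Q / 3)

/-- The discretized conical annulus `Δ*_{Q,X}`. -/
def discAnnulus {n : ℕ} (V : Submodule ℝ (E n)) (α : ℝ) (Q : DyadicCube n) :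
    Set (DyadicCube n) :=
  {R | R.side = Q.side ∧ (R.toSet ∩ conAnnulus V α Q).Nonempty}

/-- The conical defect `Defect(μ,Q,X)`. -/
def defect {n : ℕ} (μ : Measure (E n)) (V : Submodule ℝ (E n)) (α : ℝ)
    (Q : DyadicCube n) : ℝ≥0∞ :=
  if μ Q.toSet = 0 then 0
  else ∑' R : discAnnulus V α Q, μ (R : DyadicCube n).toSet / μ Q.toSet

/-- The conical Dini function `G_{μ,X}(x)`. -/
def dini {n : ℕ} (μ : Measure (E n)) (V : Submodule ℝ (E n)) (α : ℝ) (x : E n) : ℝ≥0∞ :=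
  ∑' Q : {Q : DyadicCube n // Q.side ≤ 1 ∧ x ∈ Q.toSet}, defect μ V α Q.1

/-- `gap(S,T) = inf {|s-t| : s ∈ S, t ∈ T}` (with value `∞` if either set is empty). -/
def gap {n : ℕ} (S T : Set (E n)) : ℝ≥0∞ :=
  ⨅ (s : S) (t : T), edist (s : E n) (t : E n)

/-- `excess(S,T) = sup_{s∈S} inf_{t∈T} |s-t|` (with `excess(∅,T) = 0`). -/
def excess {n : ℕ} (S T : Set (E n)) : ℝ≥0∞ :=
  ⨆ s : S, ⨅ t : T, edist (s : E n) (t : E n)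

/-- `S` is a tree of dyadic cubes with top cube `top`. -/
def IsDyadicTree {n : ℕ} (S : Set (DyadicCube n)) (top : DyadicCube n) : Prop :=
  top ∈ S ∧ (∀ Q ∈ S, Q.toSet ⊆ top.toSet) ∧
    ∀ Q ∈ S, ∀ P : DyadicCube n, Q.toSet ⊆ P.toSet → P.toSet ⊆ top.toSet → P ∈ S

/-- The set of leaves of a family `S` of dyadic cubes with top cube `top`:
the union over infinite branches of the intersections along the branch. -/
def leavesOf {n : ℕ} (top : DyadicCube n) (S : Set (DyadicCube n)) : Set (E n) :=
  {x | ∃ β : ℕ → DyadicCube n, (∀ i, β i ∈ S) ∧ (∀ i, (β i).k = top.k + i) ∧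
    (∀ i, (β (i + 1)).toSet ⊆ (β i).toSet) ∧ ∀ i, x ∈ (β i).toSet}

/-- `Γ` is an `m`-dimensional Lipschitz graph in `ℝⁿ`. -/
def IsLipGraph (n m : ℕ) (Γ : Set (E n)) : Prop :=
  ∃ (V : Submodule ℝ (E n)) (f : V → Vᗮ) (L : ℝ),
    Module.finrank ℝ V = m ∧ 0 ≤ L ∧ LipBound V L f ∧ Γ = graphOf V f

/-- `μ` is carried by `m`-dimensional Lipschitz graphs. -/
def CarriedByGraphs (n m : ℕ) (μ : Measure (E n)) : Prop :=
  ∃ Γ : ℕ → Set (E n), (∀ i, IsLipGraph n m (Γ i)) ∧ μ (univ \ ⋃ i, Γ i) = 0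

/-- `μ` is singular to `m`-dimensional Lipschitz graphs. -/
def SingularToGraphs (n m : ℕ) (μ : Measure (E n)) : Prop :=
  ∀ Γ : Set (E n), IsLipGraph n m Γ → μ Γ = 0

/-!
If `y - x` lies in the bad cone for two leaves `x, y`, pick the generation `i` at which
`|y - x|` is comparable to `r_{Q,X}` for the cube `Q` of the branch of `x`; the cube of the
branch of `y` of that generation then belongs to `Δ*_{Q,X}`, so it is `μ`-null. Hence, off the
`μ`-null union of the null cubes of the tree, the leaves form a set on which the
`V^⊥`-component is an `α`-Lipschitz function of the `V`-component, and Kirszbraun's theorem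
extends this function to all of `V` with the same constant.
-/

open Filter
open scoped RealInnerProductSpace Topology

section Kirszbraun

variable {X Y : Type*} [NormedAddCommGroup X] [InnerProductSpace ℝ X]
  [NormedAddCommGroup Y] [InnerProductSpace ℝ Y]

theorem exists_forall_inner_neg_of_zero_notMem_convexHull [CompleteSpace Y] {ι : Type*}
    [Finite ι] (v : ι → Y) (h : (0 : Y) ∉ convexHull ℝ (range v)) :
    ∃ d : Y, ∀ i, ⟪d, v i⟫ < 0 := by
  obtain ⟨f, u, hfu, hu⟩ := geometric_hahn_banach_closed_point (convex_convexHull ℝ _)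
    ((Set.finite_range v).isClosed_convexHull ℝ) h
  refine ⟨(InnerProductSpace.toDual ℝ Y).symm f, fun i => ?_⟩
  rw [InnerProductSpace.toDual_symm_apply]
  exact (hfu _ (subset_convexHull ℝ _ (mem_range_self i))).trans (by simpa using hu)

theorem exists_forall_norm_sub_sq_sub_lt {ι : Type*} [Finite ι] (y : ι → Y) (c : ι → ℝ)
    {w₀ : Y} {M : ℝ} (hle : ∀ i, ‖w₀ - y i‖ ^ 2 - c i ≤ M) {d : Y}
    (hd : ∀ i, ‖w₀ - y i‖ ^ 2 - c i = M → ⟪d, w₀ - y i⟫ < 0) :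
    ∃ w, ∀ i, ‖w - y i‖ ^ 2 - c i < M := by
  have hexpand : ∀ (t : ℝ) i, ‖w₀ + t • d - y i‖ ^ 2 - c i
      = ‖w₀ - y i‖ ^ 2 - c i + t * (2 * ⟪d, w₀ - y i⟫ + t * ‖d‖ ^ 2) := by
    intro t i
    rw [show w₀ + t • d - y i = (w₀ - y i) + t • d by abel, norm_add_sq_real,
      real_inner_smul_right, norm_smul, real_inner_comm, Real.norm_eq_abs, mul_pow, sq_abs]
    ring
  have hevent : ∀ i, ∀ᶠ t in 𝓝[>] (0 : ℝ), ‖w₀ + t • d - y i‖ ^ 2 - c i < M := by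
    intro i
    rcases (hle i).lt_or_eq with hlt | heq
    · have hcont : Continuous fun t : ℝ => ‖w₀ + t • d - y i‖ ^ 2 - c i := by fun_prop
      exact nhdsWithin_le_nhds (hcont.continuousAt.eventually_lt continuousAt_const
        (by simpa using hlt))
    · have hslope : ∀ᶠ t in 𝓝 (0 : ℝ), 2 * ⟪d, w₀ - y i⟫ + t * ‖d‖ ^ 2 < 0 :=
        (Continuous.continuousAt (by fun_prop)).eventually_lt continuousAt_const
          (by simpa using mul_neg_of_pos_of_neg two_pos (hd i heq))
      filter_upwards [nhdsWithin_le_nhds hslope, self_mem_nhdsWithin] with t ht htpos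
      rw [hexpand, heq]
      nlinarith [mul_neg_of_pos_of_neg htpos ht]
  obtain ⟨t, ht⟩ := (Filter.eventually_all.2 hevent).exists
  exact ⟨w₀ + t • d, ht⟩

theorem zero_mem_convexHull_of_minimax [CompleteSpace Y] {ι : Type*} [Finite ι] (y : ι → Y)
    (c : ι → ℝ) {w₀ : Y} {M : ℝ} (hle : ∀ i, ‖w₀ - y i‖ ^ 2 - c i ≤ M)
    (hmin : ∀ w, ∃ i, M ≤ ‖w - y i‖ ^ 2 - c i) :
    (0 : Y) ∈ convexHull ℝ (range fun i : {i // ‖w₀ - y i‖ ^ 2 - c i = M} => w₀ - y i) := by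
  by_contra h
  obtain ⟨d, hd⟩ := exists_forall_inner_neg_of_zero_notMem_convexHull _ h
  obtain ⟨w, hw⟩ := exists_forall_norm_sub_sq_sub_lt y c hle (d := d) fun i hi => hd ⟨i, hi⟩
  obtain ⟨i, hi⟩ := hmin w
  exact (hw i).not_ge hi

theorem norm_sum_smul_sq {Z : Type*} [NormedAddCommGroup Z] [InnerProductSpace ℝ Z] {ι : Type*}
    (s : Finset ι) (w : ι → ℝ) (u : ι → Z) :
    ‖∑ i ∈ s, w i • u i‖ ^ 2 = ∑ i ∈ s, ∑ j ∈ s, w i * w j * ⟪u i, u j⟫ := by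
  rw [← real_inner_self_eq_norm_sq, sum_inner]
  refine Finset.sum_congr rfl fun i _ => ?_
  rw [inner_sum]
  refine Finset.sum_congr rfl fun j _ => ?_
  rw [real_inner_smul_left, real_inner_smul_right]
  ring

theorem nonpos_of_sum_smul_eq_zero {ι : Type*} {s : Finset ι} {w : ι → ℝ}
    (hw₀ : ∀ i ∈ s, 0 ≤ w i) (hw₁ : ∑ i ∈ s, w i = 1) {a : ι → Y}
    (ha : ∑ i ∈ s, w i • a i = 0) {v : ι → X} {K M : ℝ}
    (hav : ∀ i ∈ s, ∀ j ∈ s, ‖a i - a j‖ ≤ K * ‖v i - v j‖)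
    (hM : ∀ i ∈ s, ‖a i‖ ^ 2 - K ^ 2 * ‖v i‖ ^ 2 = M) : M ≤ 0 := by
  -- polarization: `⟪a i, a j⟫ ≥ M + K² ⟪v i, v j⟫`; summing against `w i * w j` gives
  -- `0 = ‖∑ w • a‖² ≥ M + K² ‖∑ w • v‖²`
  have hpair : ∀ i ∈ s, ∀ j ∈ s,
      w i * w j * (M + K ^ 2 * ⟪v i, v j⟫) ≤ w i * w j * ⟪a i, a j⟫ := by
    intro i hi j hj
    refine mul_le_mul_of_nonneg_left ?_ (mul_nonneg (hw₀ i hi) (hw₀ j hj))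
    have hsq := pow_le_pow_left₀ (norm_nonneg _) (hav i hi j hj) 2
    rw [norm_sub_sq_real, mul_pow, norm_sub_sq_real] at hsq
    nlinarith [hM i hi, hM j hj]
  have hM_eq : ∑ i ∈ s, ∑ j ∈ s, w i * w j * M = M := by
    simp_rw [← Finset.sum_mul, ← Finset.sum_mul_sum, hw₁, one_mul]
  calc M ≤ M + K ^ 2 * ‖∑ i ∈ s, w i • v i‖ ^ 2 := by nlinarith
    _ = ∑ i ∈ s, ∑ j ∈ s, w i * w j * (M + K ^ 2 * ⟪v i, v j⟫) := by
      simp_rw [norm_sum_smul_sq, mul_add, Finset.sum_add_distrib, hM_eq, Finset.mul_sum]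
      congr 1
      refine Finset.sum_congr rfl fun i _ => Finset.sum_congr rfl fun j _ => by ring
    _ ≤ ∑ i ∈ s, ∑ j ∈ s, w i * w j * ⟪a i, a j⟫ :=
      Finset.sum_le_sum fun i hi => Finset.sum_le_sum fun j hj => hpair i hi j hj
    _ = 0 := by rw [← norm_sum_smul_sq, ha, norm_zero, sq, mul_zero]

/-- The finite case of Kirszbraun's theorem: at a minimizer `w₀` of
`max_i (‖w - y i‖² - K² ‖z - x i‖²)`, the origin is a convex combination of the `w₀ - y i` with
maximal excess, and `nonpos_of_sum_smul_eq_zero` shows that this maximum is `≤ 0`. -/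
theorem exists_dist_le_mul_dist_of_finite [ProperSpace Y] {ι : Type*} [Finite ι] (x : ι → X)
    (y : ι → Y) {K : ℝ≥0} (hxy : ∀ i j, dist (y i) (y j) ≤ K * dist (x i) (x j)) (z : X) :
    ∃ w, ∀ i, dist w (y i) ≤ K * dist z (x i) := by
  rcases isEmpty_or_nonempty ι with hι | hι
  · exact ⟨0, fun i => isEmptyElim i⟩
  have i₀ : ι := Classical.arbitrary ι
  have := Fintype.ofFinite ι
  set c : ι → ℝ := fun i => (K : ℝ) ^ 2 * ‖z - x i‖ ^ 2
  set φ : Y → ℝ := fun w => Finset.univ.sup' Finset.univ_nonempty fun i => ‖w - y i‖ ^ 2 - c i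
  have hle : ∀ w i, ‖w - y i‖ ^ 2 - c i ≤ φ w := fun w i =>
    Finset.le_sup' (fun i => ‖w - y i‖ ^ 2 - c i) (Finset.mem_univ i)
  have hφ : Continuous φ := Continuous.finset_sup'_apply _ fun i _ => by fun_prop
  have hcoercive : Tendsto φ (cocompact Y) atTop := by
    refine tendsto_atTop_mono (fun w => (sub_eq_add_neg _ (c i₀)).symm.trans_le (hle w i₀)) ?_
    simp_rw [← dist_eq_norm]
    exact tendsto_atTop_add_const_right _ _
      ((tendsto_pow_atTop two_ne_zero).comp (tendsto_dist_right_cocompact_atTop (y i₀)))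
  obtain ⟨w₀, hw₀⟩ := hφ.exists_forall_le hcoercive
  have hmin : ∀ w, ∃ i, φ w₀ ≤ ‖w - y i‖ ^ 2 - c i := fun w => by
    obtain ⟨i, -, hi⟩ := Finset.exists_mem_eq_sup' Finset.univ_nonempty
      fun i => ‖w - y i‖ ^ 2 - c i
    exact ⟨i, hi ▸ hw₀ w⟩
  have h0 := zero_mem_convexHull_of_minimax y c (hle w₀) hmin
  rw [convexHull_range_eq_exists_affineCombination] at h0
  obtain ⟨s, wt, hwt₀, hwt₁, hcomb⟩ := h0
  rw [Finset.affineCombination_eq_linear_combination _ _ _ hwt₁] at hcomb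
  have hφ₀ : φ w₀ ≤ 0 := nonpos_of_sum_smul_eq_zero hwt₀ hwt₁ hcomb (v := fun i => z - x i)
    (fun i _ j _ => by simpa [dist_eq_norm, norm_sub_rev] using hxy j i) fun i _ => i.2
  refine ⟨w₀, fun i => ?_⟩
  rw [← pow_le_pow_iff_left₀ dist_nonneg (by positivity) two_ne_zero, mul_pow, dist_eq_norm,
    dist_eq_norm]
  linarith [hle w₀ i]

theorem exists_dist_le_mul_dist [ProperSpace Y] {G : Set (X × Y)} {K : ℝ≥0}
    (hG : ∀ p ∈ G, ∀ q ∈ G, dist p.2 q.2 ≤ K * dist p.1 q.1) (z : X) :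
    ∃ w, ∀ p ∈ G, dist w p.2 ≤ K * dist z p.1 := by
  classical
  rcases G.eq_empty_or_nonempty with rfl | ⟨p₀, hp₀⟩
  · exact ⟨0, by simp⟩
  let B : G → Set Y := fun p => closedBall p.1.2 (K * dist z p.1.1)
  obtain ⟨w, -, hw⟩ := (isCompact_closedBall p₀.2 (K * dist z p₀.1)).inter_iInter_nonempty B
    (fun _ => isClosed_closedBall) fun u => by
      obtain ⟨w, hw⟩ := exists_dist_le_mul_dist_of_finite
        (fun p : (insert ⟨p₀, hp₀⟩ u : Finset G) => p.1.1.1) (fun p => p.1.1.2)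
        (fun p q => hG _ p.1.2 _ q.1.2) z
      exact ⟨w, hw ⟨_, Finset.mem_insert_self _ _⟩,
        mem_iInter₂.2 fun p hp => hw ⟨p, Finset.mem_insert_of_mem hp⟩⟩
  exact ⟨w, fun p hp => mem_iInter.1 hw ⟨p, hp⟩⟩

theorem exists_lipschitzWith_extension [ProperSpace Y] {G : Set (X × Y)} {K : ℝ≥0}
    (hG : ∀ p ∈ G, ∀ q ∈ G, dist p.2 q.2 ≤ K * dist p.1 q.1) :
    ∃ f : X → Y, LipschitzWith K f ∧ ∀ p ∈ G, f p.1 = p.2 := by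
  let 𝒮 : Set (Set (X × Y)) := {H | ∀ p ∈ H, ∀ q ∈ H, dist p.2 q.2 ≤ K * dist p.1 q.1}
  have hchain : ∀ c ⊆ 𝒮, IsChain (· ⊆ ·) c → c.Nonempty → ∃ ub ∈ 𝒮, ∀ H ∈ c, H ⊆ ub := by
    refine fun c hc𝒮 hc _ => ⟨⋃₀ c, ?_, fun H hH => subset_sUnion_of_mem hH⟩
    rintro p ⟨H₁, hH₁, hp⟩ q ⟨H₂, hH₂, hq⟩
    rcases hc.total hH₁ hH₂ with h | h
    · exact hc𝒮 hH₂ _ (h hp) _ hq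
    · exact hc𝒮 hH₁ _ hp _ (h hq)
  obtain ⟨Gmax, hGsub, hmax⟩ := zorn_subset_nonempty 𝒮 hchain G hG
  have htotal : ∀ v : X, ∃ w : Y, (v, w) ∈ Gmax := fun v => by
    obtain ⟨w, hw⟩ := exists_dist_le_mul_dist hmax.prop v
    have hins : insert (v, w) Gmax ∈ 𝒮 := by
      rintro p (rfl | hp) q (rfl | hq)
      · simp
      · simpa [dist_comm] using hw q hq
      · simpa [dist_comm] using hw p hp
      · exact hmax.prop p hp q hq
    exact ⟨w, hmax.eq_of_ge hins (subset_insert _ _) ▸ mem_insert _ _⟩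
  choose f hf using htotal
  refine ⟨f, LipschitzWith.of_dist_le_mul fun v w => hmax.prop _ (hf v) _ (hf w), fun p hp => ?_⟩
  simpa using hmax.prop _ (hf p.1) _ (hGsub hp)

end Kirszbraun

instance {n : ℕ} : Countable (DyadicCube n) :=
  (Function.Injective.countable (f := fun Q : DyadicCube n => (Q.k, Q.j))
    fun ⟨_, _⟩ ⟨_, _⟩ h => by simpa [Prod.ext_iff] using h)

theorem EuclideanSpace.dist_le_sqrt_card_mul {ι : Type*} [Fintype ι]
    {x y : EuclideanSpace ℝ ι} {b : ℝ} (hb : 0 ≤ b) (h : ∀ i, dist (x i) (y i) ≤ b) :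
    dist x y ≤ Real.sqrt (Fintype.card ι) * b := by
  rw [EuclideanSpace.dist_eq, ← Real.sqrt_sq hb, ← Real.sqrt_mul (Nat.cast_nonneg _)]
  refine Real.sqrt_le_sqrt ?_
  calc ∑ i, dist (x i) (y i) ^ 2 ≤ ∑ _i : ι, b ^ 2 :=
        Finset.sum_le_sum fun i _ => pow_le_pow_left₀ dist_nonneg (h i) 2
    _ = Fintype.card ι * b ^ 2 := by simp

namespace DyadicCube

variable {n : ℕ}

theorem side_pos (Q : DyadicCube n) : 0 < Q.side :=
  zpow_pos two_pos _

theorem side_eq_div_two_pow {Q P : DyadicCube n} {i : ℕ} (h : Q.k = P.k + i) :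
    Q.side = P.side / 2 ^ i := by
  rw [side, side, h, neg_add, zpow_add₀ two_ne_zero, zpow_neg (a := (2 : ℝ)) (i : ℤ), zpow_natCast,
    div_eq_mul_inv]

theorem dist_center_le {Q : DyadicCube n} {x : E n} (hx : x ∈ Q.toSet) :
    dist x Q.center ≤ Real.sqrt n * (Q.side / 2) := by
  refine (EuclideanSpace.dist_le_sqrt_card_mul (b := Q.side / 2) (by linarith [Q.side_pos])
    fun i => ?_).trans_eq (by rw [Fintype.card_fin])
  obtain ⟨h₁, h₂⟩ := hx i
  rw [Real.dist_eq, abs_le]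
  change _ ≤ x i - ((Q.j i : ℝ) + 1 / 2) * Q.side ∧ x i - ((Q.j i : ℝ) + 1 / 2) * Q.side ≤ _
  constructor <;> linarith

theorem dist_le_of_mem {Q : DyadicCube n} {x y : E n} (hx : x ∈ Q.toSet) (hy : y ∈ Q.toSet) :
    dist x y ≤ Real.sqrt n * Q.side := by
  refine (EuclideanSpace.dist_le_sqrt_card_mul Q.side_pos.le fun i => ?_).trans_eq
    (by rw [Fintype.card_fin])
  obtain ⟨h₁, h₂⟩ := hx i
  obtain ⟨h₃, h₄⟩ := hy i
  rw [Real.dist_eq, abs_le]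
  constructor <;> nlinarith

end DyadicCube

section ConeRadius

variable {n : ℕ} {α : ℝ}

theorem sqrt_mul_side_le_coneRadius (hα : 0 < α) (Q : DyadicCube n) :
    81 * (Real.sqrt n * Q.side) ≤ coneRadius α Q := by
  have hmax : 1 ≤ max α α⁻¹ := by
    rcases le_total α 1 with h | h
    · exact le_max_of_le_right (one_le_inv₀ hα |>.2 h)
    · exact le_max_of_le_left h
  rw [coneRadius]
  have := mul_le_mul_of_nonneg_left hmax
    (mul_nonneg (by positivity : 0 ≤ 81 * Real.sqrt n) Q.side_pos.le)
  nlinarith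

theorem coneRadius_eq_div_two_pow {Q P : DyadicCube n} {i : ℕ} (h : Q.k = P.k + i) :
    coneRadius α Q = coneRadius α P / 2 ^ i := by
  rw [coneRadius, coneRadius, DyadicCube.side_eq_div_two_pow h, mul_div_assoc]

theorem mem_conAnnulus_of_dist (V : Submodule ℝ (E n)) (hα : 0 < α) {Q : DyadicCube n}
    {x y : E n} (hx : x ∈ Q.toSet) (hxy : y - x ∈ badCone V α)
    (h₁ : 3 / 8 * coneRadius α Q < dist y x) (h₂ : dist y x ≤ 3 / 4 * coneRadius α Q) :
    y ∈ conAnnulus V α Q := by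
  have hxc : dist x Q.center ≤ coneRadius α Q / 162 := by
    linarith [Q.dist_center_le hx, sqrt_mul_side_le_coneRadius hα Q]
  refine ⟨⟨mem_biUnion hx hxy, ?_⟩, ?_⟩
  · rw [mem_closedBall]
    linarith [dist_triangle y x Q.center]
  · rw [mem_ball, not_lt]
    linarith [dist_triangle y Q.center x, dist_comm x Q.center]

end ConeRadius

theorem exists_div_two_pow_div_two_lt_le {a d : ℝ} (hd : 0 < d) (hda : d ≤ a) :
    ∃ i : ℕ, a / 2 ^ i / 2 < d ∧ d ≤ a / 2 ^ i := by
  obtain ⟨i, hi₁, hi₂⟩ := exists_nat_pow_near ((one_le_div hd).2 hda) one_lt_two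
  refine ⟨i, ?_, ?_⟩
  · rw [div_div, ← pow_succ, div_lt_iff₀ (by positivity)]
    rwa [div_lt_iff₀ hd, mul_comm] at hi₂
  · rwa [le_div_iff₀ (by positivity), mul_comm, ← le_div_iff₀ hd]

section BadCone

variable {n : ℕ}

theorem infDist_eq_norm_sub_starProjection {F : Type*} [NormedAddCommGroup F]
    [InnerProductSpace ℝ F] (W : Submodule ℝ F) [W.HasOrthogonalProjection] (z : F) :
    infDist z W = ‖z - W.starProjection z‖ := by
  rw [infDist_eq_iInf, Submodule.starProjection_minimal]
  simp_rw [dist_eq_norm]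
  rfl

theorem notMem_badCone_iff (V : Submodule ℝ (E n)) (α : ℝ) (z : E n) :
    z ∉ badCone V α ↔ ‖Vᗮ.starProjection z‖ ≤ α * ‖V.starProjection z‖ := by
  have hsum := (V.starProjection_add_starProjection_orthogonal z).symm
  rw [badCone, mem_ofPred_eq, not_lt, infDist_eq_norm_sub_starProjection,
    infDist_eq_norm_sub_starProjection, sub_eq_iff_eq_add.2 hsum, sub_eq_iff_eq_add'.2 hsum]

theorem dist_orthogonalProjectionOnto_le_of_sub_notMem_badCone (V : Submodule ℝ (E n))
    {α : ℝ} {x y : E n} (h : y - x ∉ badCone V α) :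
    dist (Vᗮ.orthogonalProjectionOnto x) (Vᗮ.orthogonalProjectionOnto y) ≤
      α * dist (V.orthogonalProjectionOnto x) (V.orthogonalProjectionOnto y) := by
  rw [notMem_badCone_iff, map_sub, map_sub, norm_sub_rev, norm_sub_rev (V.starProjection y)] at h
  rw [Subtype.dist_eq, Subtype.dist_eq, dist_eq_norm, dist_eq_norm]
  exact h

theorem zero_notMem_badCone (V : Submodule ℝ (E n)) (α : ℝ) : (0 : E n) ∉ badCone V α := by
  simp [notMem_badCone_iff]

theorem exists_mem_discAnnulus_of_sub_mem_badCone (V : Submodule ℝ (E n)) {α : ℝ} (hα : 0 < α)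
    {S : Set (DyadicCube n)} {top : DyadicCube n} (htop : ∀ Q ∈ S, Q.toSet ⊆ top.toSet)
    {x y : E n} (hx : x ∈ leavesOf top S) (hy : y ∈ leavesOf top S)
    (hxy : y - x ∈ badCone V α) :
    ∃ Q ∈ S, ∃ R ∈ S, R ∈ discAnnulus V α Q ∧ y ∈ R.toSet := by
  obtain ⟨β, hβS, hβk, -, hxβ⟩ := hx
  obtain ⟨γ, hγS, hγk, -, hyγ⟩ := hy
  have hd : 0 < dist y x :=
    dist_pos.2 fun h => zero_notMem_badCone V α (by rwa [h, sub_self] at hxy)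
  have hdtop : dist y x ≤ 3 / 4 * coneRadius α top := by
    nlinarith [DyadicCube.dist_le_of_mem (htop _ (hγS 0) (hyγ 0)) (htop _ (hβS 0) (hxβ 0)),
      sqrt_mul_side_le_coneRadius hα top, Real.sqrt_nonneg n, top.side_pos]
  obtain ⟨i, hi₁, hi₂⟩ := exists_div_two_pow_div_two_lt_le hd hdtop
  have hr := coneRadius_eq_div_two_pow (α := α) (hβk i)
  refine ⟨β i, hβS i, γ i, hγS i, ⟨?_, y, hyγ i, ?_⟩, hyγ i⟩
  · rw [DyadicCube.side_eq_div_two_pow (hγk i), DyadicCube.side_eq_div_two_pow (hβk i)]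
  · refine mem_conAnnulus_of_dist V hα (hxβ i) hxy ?_ ?_ <;> rw [hr] <;> linarith
      [show 3 / 4 * coneRadius α top / 2 ^ i = 3 / 4 * (coneRadius α top / 2 ^ i) by ring]

end BadCone

theorem statement4_general {n : ℕ}
    (S : Set (DyadicCube n)) (top : DyadicCube n) (hS : IsDyadicTree S top)
    (μ : Measure (E n))
    (V : Submodule ℝ (E n)) (α : ℝ) (hα : 0 < α)
    (h : ∀ Q ∈ S, ∀ R ∈ S, R ∈ discAnnulus V α Q → μ R.toSet = 0) :
    ∃ f : V → Vᗮ, LipBound V α f ∧ μ (leavesOf top S \ graphOf V f) = 0 := by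
  obtain ⟨-, htop, -⟩ := hS
  set N : Set (E n) := ⋃ R ∈ {R | R ∈ S ∧ μ R.toSet = 0}, R.toSet
  have hN : μ N = 0 := (measure_biUnion_null_iff (to_countable _)).2 fun R hR => hR.2
  have hcone : ∀ x ∈ leavesOf top S \ N, ∀ y ∈ leavesOf top S \ N, y - x ∉ badCone V α := by
    rintro x ⟨hx, -⟩ y ⟨hy, hyN⟩ hxy
    obtain ⟨Q, hQ, R, hR, hRQ, hyR⟩ :=
      exists_mem_discAnnulus_of_sub_mem_badCone V hα htop hx hy hxy
    exact hyN (mem_biUnion ⟨hR, h Q hQ R hR hRQ⟩ hyR)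
  obtain ⟨f, hf, hfG⟩ := exists_lipschitzWith_extension (K := ⟨α, hα.le⟩)
    (G := (fun z => (V.orthogonalProjectionOnto z, Vᗮ.orthogonalProjectionOnto z)) ''
      (leavesOf top S \ N)) <| by
    rintro _ ⟨x, hx, rfl⟩ _ ⟨y, hy, rfl⟩
    exact dist_orthogonalProjectionOnto_le_of_sub_notMem_badCone V (hcone x hx y hy)
  refine ⟨f, hf.dist_le_mul, measure_mono_null (fun z ⟨hz, hzΓ⟩ => ?_) hN⟩
  by_contra hzN
  refine hzΓ ⟨V.orthogonalProjectionOnto z, ?_⟩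
  rw [hfG _ ⟨z, ⟨hz, hzN⟩, rfl⟩]
  exact (V.starProjection_add_starProjection_orthogonal z).symm

theorem statement4 {n m : ℕ} (hm : 1 ≤ m) (hmn : m ≤ n - 1)
    (S : Set (DyadicCube n)) (top : DyadicCube n) (hS : IsDyadicTree S top)
    (μ : Measure (E n)) [IsLocallyFiniteMeasure μ]
    (V : Submodule ℝ (E n)) (hV : Module.finrank ℝ V = m) (α : ℝ) (hα : 0 < α)
    (h : ∀ Q ∈ S, ∀ R ∈ S, R ∈ discAnnulus V α Q → μ R.toSet = 0) :
    ∃ f : V → Vᗮ, LipBound V α f ∧ μ (leavesOf top S \ graphOf V f) = 0 :=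
  statement4_general S top hS μ V α hα h

end
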